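/- arXiv:2412.20993 — 2 statements merged into one kernel-verified Lean document; each statement's English description precedes it below -/
import Mathlib

section
/- With the probe setup below, fix i ∈ ℕ, k ≥ 2, and ε > 0. Then the probability that TV(P̄_l^{l+t}, P̂_l^{l+t}) ≥ ε for some start index l ∈ {i+1, …, i+k} and some window length t ∈ {k−1, k} is at most ∑_{l=i+1}^{i+k} ∑_{t∈{k−1,k}} μ( TV(P̄_l^{l+t}, P̂_l^{l+t}) ≥ ε ) ≤ 2^{M+2}·k·exp(−(k−1)·ε²/2). -/
/-! For a fixed `S`, the increments `Z^S_τ - p^S_τ` form a martingale difference sequence with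
values in `[-1, 1]`. Conditionally on the past, Hoeffding's chord bound
`exp (c x) ≤ cosh c + x sinh c` shows that each increment multiplies the moment generating function
of the partial sum by at most `cosh c ≤ exp (c ^ 2 / 2)`, and Chernoff's bound gives the
Azuma–Hoeffding estimate `μ (ε ≤ |P̄(S) - P̂(S)|) ≤ 2 exp (-t ε ^ 2 / 2)`. The supremum defining
the total variation distance is attained, so a union bound over the `2 ^ M` sets `S`, the `k`
start indices and the two window lengths `t ≥ k - 1` gives the claim. -/

open MeasureTheory Finset

/-- Probe indicator: `Z^S_τ ω = 𝟙{Y τ ω ∈ S}`, as a real number. -/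
noncomputable def probeZ {Ω : Type*} {M : ℕ} (Y : ℕ → Ω → Fin M)
    (S : Finset (Fin M)) (τ : ℕ) (ω : Ω) : ℝ :=
  if Y τ ω ∈ S then 1 else 0

/-- Conditional probability of the probe event given the past:
`p^S_τ = E[Z^S_τ ∣ 𝓕_{τ-1}]`. -/
noncomputable def probeP {Ω : Type*} {m0 : MeasurableSpace Ω} (μ : Measure Ω) {M : ℕ}
    (ℱ : Filtration ℕ m0) (Y : ℕ → Ω → Fin M) (S : Finset (Fin M)) (τ : ℕ) : Ω → ℝ :=
  μ[probeZ Y S τ | ℱ (τ - 1)]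

/-- Empirical mixture: `P̂_l^{l+t}(S) = (1/t) ∑_{τ=l+1}^{l+t} Z^S_τ`. -/
noncomputable def empMix {Ω : Type*} {M : ℕ} (Y : ℕ → Ω → Fin M)
    (l t : ℕ) (S : Finset (Fin M)) (ω : Ω) : ℝ :=
  (1 / (t : ℝ)) * ∑ τ ∈ Icc (l + 1) (l + t), probeZ Y S τ ω

/-- True mixture: `P̄_l^{l+t}(S) = (1/t) ∑_{τ=l+1}^{l+t} p^S_τ`. -/
noncomputable def trueMix {Ω : Type*} {m0 : MeasurableSpace Ω} (μ : Measure Ω) {M : ℕ}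
    (ℱ : Filtration ℕ m0) (Y : ℕ → Ω → Fin M)
    (l t : ℕ) (S : Finset (Fin M)) (ω : Ω) : ℝ :=
  (1 / (t : ℝ)) * ∑ τ ∈ Icc (l + 1) (l + t), probeP μ ℱ Y S τ ω

/-- Total variation distance between the true and the empirical mixture, as the
supremum over all `2^M` subsets `S ⊆ Fin M` of `|P̄_l^{l+t}(S) − P̂_l^{l+t}(S)|`. -/
noncomputable def tvMix {Ω : Type*} {m0 : MeasurableSpace Ω} (μ : Measure Ω) {M : ℕ}
    (ℱ : Filtration ℕ m0) (Y : ℕ → Ω → Fin M) (l t : ℕ) (ω : Ω) : ℝ :=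
  ⨆ S : Finset (Fin M), |trueMix μ ℱ Y l t S ω - empMix Y l t S ω|

open ProbabilityTheory Real

section Azuma

variable {Ω : Type*} {m0 : MeasurableSpace Ω} {μ : Measure Ω}

lemma condExp_exp_mul_le_cosh [IsFiniteMeasure μ] {m : MeasurableSpace Ω} (hm : m ≤ m0)
    {d : Ω → ℝ} (hd_meas : AEMeasurable d μ) (hd_bdd : ∀ᵐ ω ∂μ, |d ω| ≤ 1)
    (hd_zero : μ[d | m] =ᵐ[μ] 0) (c : ℝ) :
    μ[fun ω => exp (c * d ω) | m] ≤ᵐ[μ] fun _ => cosh c := by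
  have hd_Icc : ∀ᵐ ω ∂μ, d ω ∈ Set.Icc (-1) 1 := by
    filter_upwards [hd_bdd] with ω h using abs_le.mp h
  have hd_int : Integrable d μ := Integrable.of_mem_Icc _ _ hd_meas hd_Icc
  have h_chord : (fun ω => exp (c * d ω)) ≤ᵐ[μ] (fun _ => cosh c) + sinh c • d := by
    filter_upwards [hd_bdd] with ω h
    simpa [mul_comm] using exp_mul_le_cosh_add_mul_sinh h c
  have h_linear : μ[(fun _ => cosh c) + sinh c • d | m] =ᵐ[μ] fun _ => cosh c := by
    filter_upwards [condExp_add (integrable_const (cosh c)) (hd_int.smul (sinh c)) m,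
      condExp_smul (sinh c) d m, hd_zero] with ω h_add h_smul h_zero
    simp [h_add, h_smul, h_zero, condExp_const hm]
  exact (condExp_mono (integrable_exp_mul_of_mem_Icc hd_meas hd_Icc)
    ((integrable_const _).add (hd_int.smul _)) h_chord).trans_eq h_linear

lemma integral_mul_le_of_condExp_le [IsFiniteMeasure μ] {m : MeasurableSpace Ω} (hm : m ≤ m0)
    {G e : Ω → ℝ} {C : ℝ} (hG : StronglyMeasurable[m] G) (hG_nonneg : 0 ≤ᵐ[μ] G)
    (hG_int : Integrable G μ) (hGe_int : Integrable (G * e) μ) (he_int : Integrable e μ)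
    (he_le : μ[e | m] ≤ᵐ[μ] fun _ => C) :
    ∫ ω, G ω * e ω ∂μ ≤ C * ∫ ω, G ω ∂μ := by
  have h_pull : μ[G * e | m] =ᵐ[μ] G * μ[e | m] :=
    condExp_mul_of_stronglyMeasurable_left hG hGe_int he_int
  calc ∫ ω, G ω * e ω ∂μ = ∫ ω, μ[G * e | m] ω ∂μ := (integral_condExp hm).symm
    _ = ∫ ω, G ω * μ[e | m] ω ∂μ := integral_congr_ae h_pull
    _ ≤ ∫ ω, G ω * C ∂μ := by
      refine integral_mono_ae (integrable_condExp.congr h_pull) (hG_int.mul_const C) ?_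
      filter_upwards [he_le, hG_nonneg] with ω h hG using mul_le_mul_of_nonneg_left h hG
    _ = C * ∫ ω, G ω ∂μ := by rw [integral_mul_const, mul_comm]

variable (μ) in
structure IsUnitBoundedMartingaleDiff (ℱ : Filtration ℕ m0) (d : ℕ → Ω → ℝ) : Prop where
  stronglyMeasurable : ∀ τ, StronglyMeasurable[ℱ τ] (d τ)
  abs_le_one : ∀ τ, ∀ᵐ ω ∂μ, |d τ ω| ≤ 1
  condExp_succ : ∀ τ, μ[d (τ + 1) | ℱ τ] =ᵐ[μ] 0

namespace IsUnitBoundedMartingaleDiff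

variable {ℱ : Filtration ℕ m0} {d : ℕ → Ω → ℝ}

lemma neg (h : IsUnitBoundedMartingaleDiff μ ℱ d) :
    IsUnitBoundedMartingaleDiff μ ℱ (fun τ => -d τ) where
  stronglyMeasurable τ := (h.stronglyMeasurable τ).neg
  abs_le_one τ := by simpa only [Pi.neg_apply, abs_neg] using h.abs_le_one τ
  condExp_succ τ := by
    filter_upwards [condExp_neg (d (τ + 1)) (ℱ τ), h.condExp_succ τ] with ω h_neg h_zero
    simp [h_neg, h_zero]

lemma integrable_exp_mul_sum [IsFiniteMeasure μ] (h : IsUnitBoundedMartingaleDiff μ ℱ d)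
    (s : Finset ℕ) (c : ℝ) :
    Integrable (fun ω => exp (c * ∑ τ ∈ s, d τ ω)) μ := by
  refine integrable_exp_mul_of_mem_Icc (a := -(#s : ℝ)) (b := #s)
    (Finset.aemeasurable_fun_sum s fun τ _ =>
      ((h.stronglyMeasurable τ).mono (ℱ.le τ)).measurable.aemeasurable) ?_
  filter_upwards [ae_all_iff.2 h.abs_le_one] with ω hω
  refine abs_le.mp ((abs_sum_le_sum_abs _ _).trans ?_)
  simpa using Finset.sum_le_sum fun τ (_ : τ ∈ s) => hω τ

lemma integral_exp_mul_sum_le_cosh_pow [IsProbabilityMeasure μ]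
    (h : IsUnitBoundedMartingaleDiff μ ℱ d) (l : ℕ) (c : ℝ) (n : ℕ) :
    ∫ ω, exp (c * ∑ τ ∈ Icc (l + 1) (l + n), d τ ω) ∂μ ≤ cosh c ^ n := by
  induction n with
  | zero => simp
  | succ n ih =>
    set G : Ω → ℝ := fun ω => exp (c * ∑ τ ∈ Icc (l + 1) (l + n), d τ ω)
    set e : Ω → ℝ := fun ω => exp (c * d (l + n + 1) ω)
    have h_split : (fun ω => exp (c * ∑ τ ∈ Icc (l + 1) (l + (n + 1)), d τ ω)) = G * e := by
      funext ω
      rw [← add_assoc, sum_Icc_succ_top (by omega), mul_add, exp_add]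
      rfl
    have hG : StronglyMeasurable[ℱ (l + n)] G :=
      continuous_exp.comp_stronglyMeasurable <| (Finset.stronglyMeasurable_fun_sum _
        fun τ hτ => (h.stronglyMeasurable τ).mono (ℱ.mono (by grind))).const_mul c
    have he_int : Integrable e μ := by
      simpa using h.integrable_exp_mul_sum {l + n + 1} c
    have he_le : μ[e | ℱ (l + n)] ≤ᵐ[μ] fun _ => cosh c :=
      condExp_exp_mul_le_cosh (ℱ.le _)
        ((h.stronglyMeasurable _).mono (ℱ.le _)).measurable.aemeasurable
        (h.abs_le_one _) (h.condExp_succ _) c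
    rw [h_split, pow_succ, mul_comm _ (cosh c)]
    calc ∫ ω, G ω * e ω ∂μ ≤ cosh c * ∫ ω, G ω ∂μ :=
          integral_mul_le_of_condExp_le (ℱ.le _) hG (ae_of_all _ fun _ => (exp_pos _).le)
            (h.integrable_exp_mul_sum _ c) (h_split ▸ h.integrable_exp_mul_sum _ c) he_int he_le
      _ ≤ cosh c * cosh c ^ n := mul_le_mul_of_nonneg_left ih (cosh_pos c).le

-- Azuma–Hoeffding: Chernoff's bound combined with `cosh ε ≤ exp (ε ^ 2 / 2)`.
lemma measure_le_sum_le [IsProbabilityMeasure μ] (h : IsUnitBoundedMartingaleDiff μ ℱ d)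
    (l n : ℕ) {ε : ℝ} (hε : 0 ≤ ε) :
    μ {ω | n * ε ≤ ∑ τ ∈ Icc (l + 1) (l + n), d τ ω} ≤ ENNReal.ofReal (exp (-n * ε ^ 2 / 2)) := by
  set W : Ω → ℝ := fun ω => ∑ τ ∈ Icc (l + 1) (l + n), d τ ω
  have h_mgf : mgf W μ ε ≤ exp (n * (ε ^ 2 / 2)) :=
    calc mgf W μ ε ≤ cosh ε ^ n := h.integral_exp_mul_sum_le_cosh_pow l ε n
      _ ≤ exp (ε ^ 2 / 2) ^ n := pow_le_pow_left₀ (cosh_pos ε).le (cosh_le_exp_half_sq ε) n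
      _ = exp (n * (ε ^ 2 / 2)) := (exp_nat_mul _ n).symm
  rw [← ofReal_measureReal]
  refine ENNReal.ofReal_le_ofReal ?_
  calc μ.real {ω | n * ε ≤ W ω} ≤ exp (-ε * (n * ε)) * mgf W μ ε :=
        measure_ge_le_exp_mul_mgf _ hε (h.integrable_exp_mul_sum _ ε)
    _ ≤ exp (-ε * (n * ε)) * exp (n * (ε ^ 2 / 2)) := by gcongr
    _ = exp (-n * ε ^ 2 / 2) := by rw [← exp_add]; ring_nf

lemma measure_le_abs_sum_le [IsProbabilityMeasure μ] (h : IsUnitBoundedMartingaleDiff μ ℱ d)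
    (l n : ℕ) {ε : ℝ} (hε : 0 ≤ ε) :
    μ {ω | n * ε ≤ |∑ τ ∈ Icc (l + 1) (l + n), d τ ω|} ≤
      ENNReal.ofReal (2 * exp (-n * ε ^ 2 / 2)) := by
  have h_union : {ω | n * ε ≤ |∑ τ ∈ Icc (l + 1) (l + n), d τ ω|} =
      {ω | n * ε ≤ ∑ τ ∈ Icc (l + 1) (l + n), d τ ω} ∪
        {ω | n * ε ≤ ∑ τ ∈ Icc (l + 1) (l + n), -d τ ω} := by
    ext ω
    simp [le_abs]
  rw [h_union, two_mul, ENNReal.ofReal_add (exp_pos _).le (exp_pos _).le]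
  exact (measure_union_le _ _).trans
    (add_le_add (h.measure_le_sum_le l n hε) (h.neg.measure_le_sum_le l n hε))

end IsUnitBoundedMartingaleDiff

end Azuma

section Probe

variable {Ω : Type*} {m0 : MeasurableSpace Ω} {μ : Measure Ω} {ℱ : Filtration ℕ m0} {M : ℕ}
  {Y : ℕ → Ω → Fin M}

lemma probeZ_mem_Icc (S : Finset (Fin M)) (τ : ℕ) (ω : Ω) : probeZ Y S τ ω ∈ Set.Icc 0 1 := by
  unfold probeZ
  split_ifs <;> simp

lemma stronglyMeasurable_probeZ (hY : ∀ τ, Measurable[ℱ τ] (Y τ)) (S : Finset (Fin M))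
    (τ : ℕ) : StronglyMeasurable[ℱ τ] (probeZ Y S τ) :=
  (Measurable.ite ((hY τ) S.measurableSet) measurable_const measurable_const).stronglyMeasurable

lemma integrable_probeZ [IsFiniteMeasure μ] (hY : ∀ τ, Measurable[ℱ τ] (Y τ))
    (S : Finset (Fin M)) (τ : ℕ) : Integrable (probeZ Y S τ) μ :=
  .of_mem_Icc 0 1 (((stronglyMeasurable_probeZ hY S τ).mono (ℱ.le τ)).measurable.aemeasurable)
    (ae_of_all μ (probeZ_mem_Icc S τ))

lemma probeP_mem_Icc [IsFiniteMeasure μ] (hY : ∀ τ, Measurable[ℱ τ] (Y τ))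
    (S : Finset (Fin M)) (τ : ℕ) : ∀ᵐ ω ∂μ, probeP μ ℱ Y S τ ω ∈ Set.Icc 0 1 := by
  have h_nonneg : 0 ≤ᵐ[μ] probeP μ ℱ Y S τ :=
    condExp_nonneg (ae_of_all _ fun ω => (probeZ_mem_Icc S τ ω).1)
  have h_le_one : probeP μ ℱ Y S τ ≤ᵐ[μ] fun _ => 1 := by
    have h := condExp_mono (μ := μ) (m := ℱ (τ - 1)) (integrable_probeZ hY S τ) (integrable_const 1)
      (ae_of_all _ fun ω => (probeZ_mem_Icc S τ ω).2)
    rwa [condExp_const (ℱ.le _)] at h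
  filter_upwards [h_nonneg, h_le_one] with ω h0 h1 using ⟨h0, h1⟩

lemma isUnitBoundedMartingaleDiff_probe [IsFiniteMeasure μ] (hY : ∀ τ, Measurable[ℱ τ] (Y τ))
    (S : Finset (Fin M)) :
    IsUnitBoundedMartingaleDiff μ ℱ (fun τ => probeZ Y S τ - probeP μ ℱ Y S τ) where
  stronglyMeasurable τ := (stronglyMeasurable_probeZ hY S τ).sub
    (stronglyMeasurable_condExp.mono (ℱ.mono (Nat.sub_le τ 1)))
  abs_le_one τ := by
    filter_upwards [probeP_mem_Icc hY S τ] with ω hP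
    have hZ := probeZ_mem_Icc (Y := Y) S τ ω
    rw [Pi.sub_apply]
    exact abs_le.mpr ⟨by linarith [hZ.1, hP.2], by linarith [hZ.2, hP.1]⟩
  condExp_succ τ := by
    simp only [probeP, add_tsub_cancel_right]
    have h_tower : μ[μ[probeZ Y S (τ + 1) | ℱ τ] | ℱ τ] = μ[probeZ Y S (τ + 1) | ℱ τ] :=
      condExp_of_stronglyMeasurable (ℱ.le τ) stronglyMeasurable_condExp integrable_condExp
    filter_upwards [condExp_sub (integrable_probeZ hY S (τ + 1)) integrable_condExp (ℱ τ)]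
      with ω h_sub
    rw [h_sub, h_tower, sub_self]

lemma abs_trueMix_sub_empMix (l t : ℕ) (S : Finset (Fin M)) (ω : Ω) :
    |trueMix μ ℱ Y l t S ω - empMix Y l t S ω| =
      |∑ τ ∈ Icc (l + 1) (l + t), (probeZ Y S τ ω - probeP μ ℱ Y S τ ω)| / t := by
  rw [trueMix, empMix, ← mul_sub, abs_mul, abs_sub_comm, ← sum_sub_distrib, one_div,
    abs_inv, Nat.abs_cast, inv_mul_eq_div]

lemma measure_le_abs_trueMix_sub_empMix_le [IsProbabilityMeasure μ]
    (hY : ∀ τ, Measurable[ℱ τ] (Y τ)) (S : Finset (Fin M)) (l : ℕ) {t : ℕ} (ht : 0 < t)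
    {ε : ℝ} (hε : 0 ≤ ε) :
    μ {ω | ε ≤ |trueMix μ ℱ Y l t S ω - empMix Y l t S ω|} ≤
      ENNReal.ofReal (2 * exp (-t * ε ^ 2 / 2)) := by
  have h_eq : {ω | ε ≤ |trueMix μ ℱ Y l t S ω - empMix Y l t S ω|} =
      {ω | t * ε ≤ |∑ τ ∈ Icc (l + 1) (l + t), (probeZ Y S τ ω - probeP μ ℱ Y S τ ω)|} := by
    ext ω
    rw [Set.mem_ofPred_eq, Set.mem_ofPred_eq, abs_trueMix_sub_empMix,
      le_div_iff₀ (Nat.cast_pos.mpr ht), mul_comm]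
  rw [h_eq]
  exact (isUnitBoundedMartingaleDiff_probe hY S).measure_le_abs_sum_le l t hε

lemma measure_le_tvMix_le [IsProbabilityMeasure μ] (hY : ∀ τ, Measurable[ℱ τ] (Y τ))
    (l : ℕ) {t : ℕ} (ht : 0 < t) {s ε : ℝ} (hst : s ≤ t) (hε : 0 ≤ ε) :
    μ {ω | ε ≤ tvMix μ ℱ Y l t ω} ≤ ENNReal.ofReal (2 ^ (M + 1) * exp (-s * ε ^ 2 / 2)) := by
  have h_sub : {ω | ε ≤ tvMix μ ℱ Y l t ω} ⊆
      ⋃ S, {ω | ε ≤ |trueMix μ ℱ Y l t S ω - empMix Y l t S ω|} := by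
    intro ω hω
    obtain ⟨S, hS⟩ := exists_eq_ciSup_of_finite
      (f := fun S : Finset (Fin M) => |trueMix μ ℱ Y l t S ω - empMix Y l t S ω|)
    exact Set.mem_iUnion.2 ⟨S, show ε ≤ _ from hS ▸ hω⟩
  calc μ {ω | ε ≤ tvMix μ ℱ Y l t ω}
      ≤ ∑ S, μ {ω | ε ≤ |trueMix μ ℱ Y l t S ω - empMix Y l t S ω|} :=
        (measure_mono h_sub).trans (measure_iUnion_fintype_le μ _)
    _ ≤ ∑ _S : Finset (Fin M), ENNReal.ofReal (2 * exp (-s * ε ^ 2 / 2)) := by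
        refine sum_le_sum fun S _ => (measure_le_abs_trueMix_sub_empMix_le hY S l ht hε).trans ?_
        gcongr
    _ = ENNReal.ofReal (2 ^ (M + 1) * exp (-s * ε ^ 2 / 2)) := by
        rw [sum_const, card_univ, Fintype.card_finset, Fintype.card_fin, nsmul_eq_mul,
          ← ENNReal.ofReal_natCast, ← ENNReal.ofReal_mul (by positivity)]
        push_cast
        ring_nf

end Probe

theorem probe_concentration_union_general {Ω : Type*} {m0 : MeasurableSpace Ω}
    (μ : Measure Ω) [IsProbabilityMeasure μ] (ℱ : Filtration ℕ m0)
    {M : ℕ} (Y : ℕ → Ω → Fin M)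
    (hY : ∀ τ, Measurable[ℱ τ] (Y τ))
    (i k : ℕ) (hk : 2 ≤ k) {ε : ℝ} (hε : 0 < ε) :
    (μ {ω | ∃ l ∈ Icc (i + 1) (i + k), ∃ t ∈ ({k - 1, k} : Finset ℕ),
        ε ≤ tvMix μ ℱ Y l t ω} ≤
      ∑ l ∈ Icc (i + 1) (i + k), ∑ t ∈ ({k - 1, k} : Finset ℕ),
        μ {ω | ε ≤ tvMix μ ℱ Y l t ω}) ∧
    ((∑ l ∈ Icc (i + 1) (i + k), ∑ t ∈ ({k - 1, k} : Finset ℕ),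
        μ {ω | ε ≤ tvMix μ ℱ Y l t ω}) ≤
      ENNReal.ofReal (2 ^ (M + 2) * k * Real.exp (-((k : ℝ) - 1) * ε ^ 2 / 2))) := by
  refine ⟨?_, ?_⟩
  · refine (measure_mono fun ω hω => ?_).trans ((measure_biUnion_finset_le _ _).trans
      (sum_le_sum fun l _ => measure_biUnion_finset_le _ _))
    simpa using hω
  · have h_term : ∀ l, ∀ t ∈ ({k - 1, k} : Finset ℕ), μ {ω | ε ≤ tvMix μ ℱ Y l t ω} ≤
        ENNReal.ofReal (2 ^ (M + 1) * exp (-((k : ℝ) - 1) * ε ^ 2 / 2)) := by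
      intro l t ht
      rcases mem_insert.mp ht with rfl | ht
      · exact measure_le_tvMix_le hY l (by omega) (by rw [Nat.cast_sub (by omega), Nat.cast_one])
          hε.le
      · rw [mem_singleton.mp ht]
        exact measure_le_tvMix_le hY l (by omega) (sub_le_self _ zero_le_one) hε.le
    calc _ ≤ ∑ _l ∈ Icc (i + 1) (i + k), ∑ _t ∈ ({k - 1, k} : Finset ℕ),
          ENNReal.ofReal (2 ^ (M + 1) * exp (-((k : ℝ) - 1) * ε ^ 2 / 2)) :=
          sum_le_sum fun l _ => sum_le_sum fun t ht => h_term l t ht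
      _ = _ := by
        rw [sum_const, sum_const, Nat.card_Icc, card_pair (by omega), smul_smul, nsmul_eq_mul,
          ← ENNReal.ofReal_natCast, ← ENNReal.ofReal_mul (by positivity),
          show i + k + 1 - (i + 1) = k by omega]
        push_cast
        ring_nf

/-- **Union bound over start indices and window lengths.**
Fix `i ∈ ℕ`, `k ≥ 2` and `ε > 0`.  The probability that
`TV(P̄_l^{l+t}, P̂_l^{l+t}) ≥ ε` for some start index `l ∈ {i+1, …, i+k}` and some
window length `t ∈ {k−1, k}` is at most the sum of the individual probabilities,
which is at most `2^{M+2} · k · exp(−(k−1) ε² / 2)`. -/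
theorem probe_concentration_union {Ω : Type*} {m0 : MeasurableSpace Ω}
    (μ : Measure Ω) [IsProbabilityMeasure μ] (ℱ : Filtration ℕ m0)
    {M : ℕ} (hM : 1 ≤ M) (Y : ℕ → Ω → Fin M)
    (hY : ∀ τ, Measurable[ℱ τ] (Y τ))
    (i k : ℕ) (hk : 2 ≤ k) {ε : ℝ} (hε : 0 < ε) :
    (μ {ω | ∃ l ∈ Icc (i + 1) (i + k), ∃ t ∈ ({k - 1, k} : Finset ℕ),
        ε ≤ tvMix μ ℱ Y l t ω} ≤
      ∑ l ∈ Icc (i + 1) (i + k), ∑ t ∈ ({k - 1, k} : Finset ℕ),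
        μ {ω | ε ≤ tvMix μ ℱ Y l t ω}) ∧
    ((∑ l ∈ Icc (i + 1) (i + k), ∑ t ∈ ({k - 1, k} : Finset ℕ),
        μ {ω | ε ≤ tvMix μ ℱ Y l t ω}) ≤
      ENNReal.ofReal (2 ^ (M + 2) * k * Real.exp (-((k : ℝ) - 1) * ε ^ 2 / 2))) :=
  probe_concentration_union_general μ ℱ Y hY i k hk hε
end

section
/- (Lemma 1, high-probability form.) With the probe setup below, fix i ∈ ℕ, k ≥ 2, ε > 0, and δ ∈ (0,1). If k is large enough that 2^{M+2}·k·exp(−(k−1)·ε²/2) ≤ δ, then with probability at least 1 − δ we have TV(P̄_l^{l+t}, P̂_l^{l+t}) < ε simultaneously for every start index l ∈ {i+1, …, i+k} and every window length t ∈ {k−1, k}. -/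
/-!
For a fixed set `S`, the increments `p^S_τ - Z^S_τ` are martingale differences whose conditional
law given `𝓕_{τ-1}` is that of `p - B` with `B ∼ Bernoulli p`. Convexity of `exp` bounds their
conditional moment generating function by `exp (c² / 2)`, so by the tower property every window
sum of length `t` is sub-Gaussian with variance proxy `t` (Azuma–Hoeffding), and the Chernoff
bound gives `P(|P̄(S) - P̂(S)| ≥ ε) ≤ 2 exp (-t ε² / 2)`. A union bound over the `2^M` sets `S`,
the `k` start indices and the two window lengths costs the factor `2^(M+2) k`.
-/

open MeasureTheory Finset

open ProbabilityTheory Real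
open scoped NNReal

-- The left-hand side is `E[exp (c (p - B))]` for `B ∼ Bernoulli p`.
theorem one_sub_mul_exp_add_mul_exp_le {p : ℝ} (hp : p ∈ Set.Icc 0 1) (c : ℝ) :
    (1 - p) * exp (p * c) + p * exp ((p - 1) * c) ≤ exp (c ^ 2 / 2) := by
  obtain ⟨hp0, hp1⟩ := hp
  calc _ ≤ (1 - p) * (cosh c + p * sinh c) + p * (cosh c + (p - 1) * sinh c) := by
        gcongr (1 - p) * ?_ + p * ?_
        · exact exp_mul_le_cosh_add_mul_sinh (abs_le.2 ⟨by linarith, hp1⟩) c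
        · exact exp_mul_le_cosh_add_mul_sinh (abs_le.2 ⟨by linarith, by linarith⟩) c
    _ = cosh c := by ring
    _ ≤ exp (c ^ 2 / 2) := cosh_le_exp_half_sq c

theorem ProbabilityTheory.HasSubgaussianMGF.measureReal_abs_ge_le {Ω : Type*}
    {m0 : MeasurableSpace Ω} {μ : Measure Ω} {X : Ω → ℝ} {c : ℝ≥0} (h : HasSubgaussianMGF X c μ)
    {ε : ℝ} (hε : 0 ≤ ε) : μ.real {ω | ε ≤ |X ω|} ≤ 2 * exp (-ε ^ 2 / (2 * c)) :=
  calc μ.real {ω | ε ≤ |X ω|} = μ.real ({ω | ε ≤ X ω} ∪ {ω | ε ≤ (-X) ω}) := by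
        congr 1; ext ω; simp only [le_abs, Set.mem_union, Set.mem_ofPred_eq, Pi.neg_apply]
    _ ≤ _ := measureReal_union_le _ _
    _ ≤ _ := by linarith [h.measure_ge_le hε, h.neg.measure_ge_le hε]

section ConditionalBernoulli

variable {Ω : Type*} {m m0 : MeasurableSpace Ω} {μ : Measure Ω} [IsFiniteMeasure μ]
  {A : Set Ω}

theorem condExp_indicator_one_mem_Icc (hA : MeasurableSet A) :
    ∀ᵐ ω ∂μ, μ[A.indicator 1 | m] ω ∈ Set.Icc (0 : ℝ) 1 := by
  by_cases hm : m ≤ m0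
  swap
  · simp [condExp_of_not_le hm]
  have hint : Integrable (A.indicator (1 : Ω → ℝ)) μ := (integrable_const 1).indicator hA
  have hnonneg := condExp_nonneg (m := m) (μ := μ)
    (ae_of_all μ (Set.indicator_nonneg (fun _ _ => zero_le_one) : 0 ≤ A.indicator (1 : Ω → ℝ)))
  have hle_one := condExp_mono (m := m) hint (integrable_const 1)
    (ae_of_all μ (Set.indicator_le_self' (fun _ _ => zero_le_one) : A.indicator 1 ≤ 1))
  rw [condExp_const hm] at hle_one
  filter_upwards [hnonneg, hle_one] with ω h0 h1 using ⟨h0, h1⟩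

theorem condExp_exp_mul_condExp_indicator_sub_indicator_le (hm : m ≤ m0)
    (hA : MeasurableSet A) (c : ℝ) :
    μ[fun ω => exp (c * (μ[A.indicator 1 | m] ω - A.indicator 1 ω)) | m]
      ≤ᵐ[μ] fun _ => exp (c ^ 2 / 2) := by
  set P := μ[A.indicator (1 : Ω → ℝ) | m]
  have hP := condExp_indicator_one_mem_Icc (μ := μ) (m := m) hA
  have hint : Integrable (A.indicator (1 : Ω → ℝ)) μ := (integrable_const 1).indicator hA
  -- `exp (-c 𝟙_A)` is affine in `𝟙_A`, so its conditional expectation is affine in `P`.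
  have hsplit : (fun ω => exp (c * (P ω - A.indicator 1 ω)))
      = (fun ω => exp (c * P ω)) * ((fun _ => 1) + (exp (-c) - 1) • A.indicator 1) := by
    ext ω
    by_cases hω : ω ∈ A
    · simp [hω, ← exp_add]; ring_nf
    · simp [hω]
  have hbound : ∀ᵐ ω ∂μ, ‖exp (c * P ω)‖ ≤ exp |c| := by
    filter_upwards [hP] with ω hω
    rw [norm_of_nonneg (exp_pos _).le, exp_le_exp]
    calc c * P ω ≤ |c| * P ω := by gcongr; exacts [hω.1, le_abs_self c]
      _ ≤ |c| := mul_le_of_le_one_right (abs_nonneg c) hω.2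
  have hpull := condExp_stronglyMeasurable_mul_of_bound hm
    (continuous_exp.comp_stronglyMeasurable (stronglyMeasurable_condExp.const_mul c))
    ((integrable_const 1).add (hint.smul (exp (-c) - 1))) _ hbound
  have hlin := condExp_add (m := m) (integrable_const (1 : ℝ)) (hint.smul (exp (-c) - 1))
  rw [condExp_const hm] at hlin
  rw [hsplit]
  have hsmul := condExp_smul (m := m) (μ := μ) (exp (-c) - 1) (A.indicator (1 : Ω → ℝ))
  filter_upwards [hpull, hlin, hsmul, hP] with ω hpull hlin hsmul hω
  rw [hpull, Pi.mul_apply, hlin, Pi.add_apply, hsmul]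
  convert one_sub_mul_exp_add_mul_exp_le hω c using 1
  simp only [Pi.smul_apply, smul_eq_mul]
  rw [mul_comm c, show ∀ q : ℝ, (q - 1) * c = q * c + -c from fun q => by ring, exp_add]
  ring

end ConditionalBernoulli

section AzumaHoeffding

variable {Ω : Type*} {m0 : MeasurableSpace Ω} {μ : Measure Ω} {ℱ : Filtration ℕ m0}
  {X : ℕ → Ω → ℝ} {C : ℝ} {v : ℝ≥0}

theorem ae_norm_exp_mul_sum_le (hC : ∀ τ, ∀ᵐ ω ∂μ, |X τ ω| ≤ C) (c : ℝ) (s : Finset ℕ) :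
    ∀ᵐ ω ∂μ, ‖exp (c * ∑ τ ∈ s, X τ ω)‖ ≤ exp (|c| * (#s * C)) := by
  filter_upwards [ae_all_iff.2 hC] with ω hω
  rw [norm_of_nonneg (exp_pos _).le, exp_le_exp]
  calc c * ∑ τ ∈ s, X τ ω ≤ |c| * |∑ τ ∈ s, X τ ω| := by rw [← abs_mul]; exact le_abs_self _
    _ ≤ |c| * (#s * C) := by
      gcongr
      exact (abs_sum_le_sum_abs _ _).trans
        (by simpa using sum_le_card_nsmul s _ C fun τ _ => hω τ)

variable [IsProbabilityMeasure μ]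

theorem integrable_exp_mul_sum_of_abs_le (hX : ∀ τ, AEStronglyMeasurable (X τ) μ)
    (hC : ∀ τ, ∀ᵐ ω ∂μ, |X τ ω| ≤ C) (c : ℝ) (s : Finset ℕ) :
    Integrable (fun ω => exp (c * ∑ τ ∈ s, X τ ω)) μ :=
  .of_bound (by fun_prop) _ (ae_norm_exp_mul_sum_le hC c s)

theorem integral_exp_mul_sum_Icc_le (hX : StronglyAdapted ℱ X)
    (hC : ∀ τ, ∀ᵐ ω ∂μ, |X τ ω| ≤ C)
    (hcond : ∀ τ c, μ[fun ω => exp (c * X (τ + 1) ω) | ℱ τ] ≤ᵐ[μ] fun _ => exp (v * c ^ 2 / 2))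
    (c : ℝ) (l t : ℕ) :
    ∫ ω, exp (c * ∑ τ ∈ Icc (l + 1) (l + t), X τ ω) ∂μ ≤ exp (t * (v * c ^ 2 / 2)) := by
  have hXm τ : AEStronglyMeasurable (X τ) μ := ((hX τ).mono (ℱ.le τ)).aestronglyMeasurable
  induction t with
  | zero => simp
  | succ t ih =>
    set G := fun ω => exp (c * ∑ τ ∈ Icc (l + 1) (l + t), X τ ω)
    set H := fun ω => exp (c * X (l + t + 1) ω)
    have hGH : (fun ω => exp (c * ∑ τ ∈ Icc (l + 1) (l + (t + 1)), X τ ω)) = G * H := by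
      ext ω
      rw [← add_assoc, sum_Icc_succ_top (by omega), mul_add, exp_add]
      rfl
    have hG : StronglyMeasurable[ℱ (l + t)] G := by
      refine continuous_exp.comp_stronglyMeasurable (.const_mul ?_ c)
      refine Finset.stronglyMeasurable_fun_sum _ fun τ hτ => (hX τ).mono (ℱ.mono ?_)
      exact (mem_Icc.1 hτ).2
    have hH : Integrable H μ := by
      simpa [H] using integrable_exp_mul_sum_of_abs_le hXm hC c {l + t + 1}
    have hpull := condExp_stronglyMeasurable_mul_of_bound (ℱ.le (l + t)) hG hH _
      (ae_norm_exp_mul_sum_le hC c _)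
    calc ∫ ω, exp (c * ∑ τ ∈ Icc (l + 1) (l + (t + 1)), X τ ω) ∂μ
        = ∫ ω, μ[G * H | ℱ (l + t)] ω ∂μ := by rw [hGH, integral_condExp (ℱ.le _)]
      _ ≤ ∫ ω, G ω * exp (v * c ^ 2 / 2) ∂μ := by
        refine integral_mono_ae integrable_condExp
          ((integrable_exp_mul_sum_of_abs_le hXm hC c _).mul_const _) ?_
        filter_upwards [hpull, hcond (l + t) c] with ω hpull hcond
        rw [hpull, Pi.mul_apply]
        exact mul_le_mul_of_nonneg_left hcond (exp_pos _).le
      _ = (∫ ω, G ω ∂μ) * exp (v * c ^ 2 / 2) := integral_mul_const _ _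
      _ ≤ exp (t * (v * c ^ 2 / 2)) * exp (v * c ^ 2 / 2) := by gcongr
      _ = exp ((t + 1 : ℕ) * (v * c ^ 2 / 2)) := by rw [← exp_add]; push_cast; ring_nf

theorem hasSubgaussianMGF_sum_Icc_of_condExp_exp_le (hX : StronglyAdapted ℱ X)
    (hC : ∀ τ, ∀ᵐ ω ∂μ, |X τ ω| ≤ C)
    (hcond : ∀ τ c, μ[fun ω => exp (c * X (τ + 1) ω) | ℱ τ] ≤ᵐ[μ] fun _ => exp (v * c ^ 2 / 2))
    (l t : ℕ) : HasSubgaussianMGF (fun ω => ∑ τ ∈ Icc (l + 1) (l + t), X τ ω) (t * v) μ where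
  integrable_exp_mul c :=
    integrable_exp_mul_sum_of_abs_le (fun τ => ((hX τ).mono (ℱ.le τ)).aestronglyMeasurable) hC c _
  mgf_le c := (integral_exp_mul_sum_Icc_le hX hC hcond c l t).trans_eq (by push_cast; ring_nf)

theorem hasSubgaussianMGF_sum_condExp_indicator_sub_indicator {A : ℕ → Set Ω}
    (hA : ∀ τ, MeasurableSet[ℱ τ] (A τ)) (l t : ℕ) :
    HasSubgaussianMGF (fun ω => ∑ τ ∈ Icc (l + 1) (l + t),
      (μ[(A τ).indicator 1 | ℱ (τ - 1)] ω - (A τ).indicator 1 ω)) t μ := by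
  have hadapted : StronglyAdapted ℱ
      fun τ ω => μ[(A τ).indicator (1 : Ω → ℝ) | ℱ (τ - 1)] ω - (A τ).indicator 1 ω := fun τ =>
    (stronglyMeasurable_condExp.mono (ℱ.mono (Nat.sub_le τ 1))).sub
      (stronglyMeasurable_one.indicator (hA τ))
  have hbound τ : ∀ᵐ ω ∂μ,
      |μ[(A τ).indicator (1 : Ω → ℝ) | ℱ (τ - 1)] ω - (A τ).indicator 1 ω| ≤ 1 := by
    filter_upwards [condExp_indicator_one_mem_Icc (μ := μ) (m := ℱ (τ - 1)) (ℱ.le τ _ (hA τ))]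
      with ω hP
    have hZ : (A τ).indicator (1 : Ω → ℝ) ω ∈ Set.Icc 0 1 := by
      by_cases hω : ω ∈ A τ <;> simp [hω]
    rw [abs_le]
    constructor <;> linarith [hP.1, hP.2, hZ.1, hZ.2]
  have hcond τ c : μ[fun ω => exp (c * (μ[(A (τ + 1)).indicator (1 : Ω → ℝ) | ℱ (τ + 1 - 1)] ω
      - (A (τ + 1)).indicator 1 ω)) | ℱ τ] ≤ᵐ[μ] fun _ => exp ((1 : ℝ≥0) * c ^ 2 / 2) := by
    simpa using
      condExp_exp_mul_condExp_indicator_sub_indicator_le (ℱ.le τ) (ℱ.le _ _ (hA (τ + 1))) c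
  simpa using hasSubgaussianMGF_sum_Icc_of_condExp_exp_le hadapted hbound hcond l t

end AzumaHoeffding

section Probe

variable {Ω : Type*} {m0 : MeasurableSpace Ω} {μ : Measure Ω} {ℱ : Filtration ℕ m0} {M : ℕ}
  {Y : ℕ → Ω → Fin M}

theorem probeZ_eq_indicator (S : Finset (Fin M)) (τ : ℕ) :
    probeZ Y S τ = (Y τ ⁻¹' S).indicator 1 := by
  ext ω
  by_cases h : Y τ ω ∈ S <;> simp [probeZ, h]

theorem probeP_eq_condExp_indicator (S : Finset (Fin M)) (τ : ℕ) :
    probeP μ ℱ Y S τ = μ[(Y τ ⁻¹' S).indicator 1 | ℱ (τ - 1)] := by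
  rw [probeP, probeZ_eq_indicator]

theorem trueMix_sub_empMix (l t : ℕ) (S : Finset (Fin M)) (ω : Ω) :
    trueMix μ ℱ Y l t S ω - empMix Y l t S ω
      = 1 / t * ∑ τ ∈ Icc (l + 1) (l + t), (probeP μ ℱ Y S τ ω - probeZ Y S τ ω) := by
  rw [trueMix, empMix, ← mul_sub, ← sum_sub_distrib]

variable [IsProbabilityMeasure μ]

theorem hasSubgaussianMGF_sum_probeP_sub_probeZ (hY : ∀ τ, Measurable[ℱ τ] (Y τ))
    (S : Finset (Fin M)) (l t : ℕ) :
    HasSubgaussianMGF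
      (fun ω => ∑ τ ∈ Icc (l + 1) (l + t), (probeP μ ℱ Y S τ ω - probeZ Y S τ ω)) t μ := by
  simp only [probeP_eq_condExp_indicator, probeZ_eq_indicator]
  exact hasSubgaussianMGF_sum_condExp_indicator_sub_indicator
    (fun τ => hY τ (S : Set (Fin M)).toFinite.measurableSet) l t

theorem measureReal_abs_trueMix_sub_empMix_ge_le (hY : ∀ τ, Measurable[ℱ τ] (Y τ)) {ε : ℝ}
    (hε : 0 ≤ ε) (l t : ℕ) (S : Finset (Fin M)) :
    μ.real {ω | ε ≤ |trueMix μ ℱ Y l t S ω - empMix Y l t S ω|} ≤ 2 * exp (-t * ε ^ 2 / 2) := by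
  set D := fun ω => ∑ τ ∈ Icc (l + 1) (l + t), (probeP μ ℱ Y S τ ω - probeZ Y S τ ω)
  -- `t * (1 / t) ≤ 1` also covers the empty window `t = 0`.
  have hsub : {ω | ε ≤ |trueMix μ ℱ Y l t S ω - empMix Y l t S ω|} ⊆ {ω | t * ε ≤ |D ω|} := by
    intro ω hω
    simp only [Set.mem_ofPred_eq, trueMix_sub_empMix, abs_mul,
      abs_of_nonneg (by positivity : (0 : ℝ) ≤ 1 / t)] at hω ⊢
    calc t * ε ≤ t * (1 / t * |D ω|) := by gcongr
      _ = (t * (t : ℝ)⁻¹) * |D ω| := by ring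
      _ ≤ 1 * |D ω| := by gcongr; exact mul_inv_le_one
      _ = |D ω| := one_mul _
  calc μ.real {ω | ε ≤ |trueMix μ ℱ Y l t S ω - empMix Y l t S ω|}
      ≤ μ.real {ω | t * ε ≤ |D ω|} := measureReal_mono hsub
    _ ≤ 2 * exp (-(t * ε) ^ 2 / (2 * t)) :=
      (hasSubgaussianMGF_sum_probeP_sub_probeZ hY S l t).measureReal_abs_ge_le (by positivity)
    _ = 2 * exp (-t * ε ^ 2 / 2) := by
      rcases eq_or_ne t 0 with rfl | ht
      · simp
      · field_simp

theorem measureReal_tvMix_ge_le (hY : ∀ τ, Measurable[ℱ τ] (Y τ)) {ε : ℝ} (hε : 0 ≤ ε)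
    (l t : ℕ) : μ.real {ω | ε ≤ tvMix μ ℱ Y l t ω} ≤ 2 ^ (M + 1) * exp (-t * ε ^ 2 / 2) := by
  have hsub : {ω | ε ≤ tvMix μ ℱ Y l t ω} ⊆ ⋃ S ∈ (univ : Finset (Finset (Fin M))),
      {ω | ε ≤ |trueMix μ ℱ Y l t S ω - empMix Y l t S ω|} := by
    intro ω hω
    obtain ⟨S, hS⟩ := exists_eq_ciSup_of_finite
      (f := fun S : Finset (Fin M) => |trueMix μ ℱ Y l t S ω - empMix Y l t S ω|)
    exact Set.mem_biUnion (mem_univ S) (by simpa [tvMix, hS] using hω)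
  calc μ.real {ω | ε ≤ tvMix μ ℱ Y l t ω}
      ≤ ∑ S : Finset (Fin M), μ.real {ω | ε ≤ |trueMix μ ℱ Y l t S ω - empMix Y l t S ω|} :=
        (measureReal_mono hsub (measure_ne_top _ _)).trans (measureReal_biUnion_finset_le _ _)
    _ ≤ ∑ _S : Finset (Fin M), 2 * exp (-t * ε ^ 2 / 2) :=
        sum_le_sum fun S _ => measureReal_abs_trueMix_sub_empMix_ge_le hY hε l t S
    _ = 2 ^ (M + 1) * exp (-t * ε ^ 2 / 2) := by
        rw [sum_const, card_univ, Fintype.card_finset, Fintype.card_fin, nsmul_eq_mul]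
        push_cast
        ring

theorem Nat.cast_sub_one_le_of_mem_pair {k t : ℕ} (ht : t ∈ ({k - 1, k} : Finset ℕ)) :
    (k : ℝ) - 1 ≤ t := by
  rcases mem_insert.1 ht with rfl | ht
  · rcases k with _ | k <;> simp
  · simp [mem_singleton.1 ht]

theorem measureReal_exists_tvMix_ge_le (hY : ∀ τ, Measurable[ℱ τ] (Y τ)) {ε : ℝ} (hε : 0 ≤ ε)
    (i k : ℕ) :
    μ.real {ω | ∃ l ∈ Icc (i + 1) (i + k), ∃ t ∈ ({k - 1, k} : Finset ℕ),
      ε ≤ tvMix μ ℱ Y l t ω} ≤ 2 ^ (M + 2) * k * exp (-((k : ℝ) - 1) * ε ^ 2 / 2) := by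
  have hsub : {ω | ∃ l ∈ Icc (i + 1) (i + k), ∃ t ∈ ({k - 1, k} : Finset ℕ),
      ε ≤ tvMix μ ℱ Y l t ω}
      ⊆ ⋃ l ∈ Icc (i + 1) (i + k), ⋃ t ∈ ({k - 1, k} : Finset ℕ), {ω | ε ≤ tvMix μ ℱ Y l t ω} :=
    fun ω ⟨l, hl, t, ht, h⟩ => Set.mem_biUnion hl (Set.mem_biUnion ht h)
  have hl : #(Icc (i + 1) (i + k)) = k := by simp
  have hpair : (#({k - 1, k} : Finset ℕ) : ℝ) ≤ 2 := by exact_mod_cast card_le_two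
  calc _ ≤ ∑ l ∈ Icc (i + 1) (i + k), ∑ t ∈ ({k - 1, k} : Finset ℕ),
        μ.real {ω | ε ≤ tvMix μ ℱ Y l t ω} :=
      (measureReal_mono hsub (measure_ne_top _ _)).trans ((measureReal_biUnion_finset_le _ _).trans
        (sum_le_sum fun l _ => measureReal_biUnion_finset_le _ _))
    _ ≤ ∑ l ∈ Icc (i + 1) (i + k), ∑ t ∈ ({k - 1, k} : Finset ℕ),
        2 ^ (M + 1) * exp (-((k : ℝ) - 1) * ε ^ 2 / 2) := by
      gcongr with l _ t ht
      refine (measureReal_tvMix_ge_le hY hε l t).trans ?_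
      gcongr
      exact Nat.cast_sub_one_le_of_mem_pair ht
    _ = k * (#({k - 1, k} : Finset ℕ) * (2 ^ (M + 1) * exp (-((k : ℝ) - 1) * ε ^ 2 / 2))) := by
      rw [sum_const, sum_const, hl, nsmul_eq_mul, nsmul_eq_mul]
    _ ≤ k * (2 * (2 ^ (M + 1) * exp (-((k : ℝ) - 1) * ε ^ 2 / 2))) := by gcongr
    _ = 2 ^ (M + 2) * k * exp (-((k : ℝ) - 1) * ε ^ 2 / 2) := by ring

end Probe

theorem probe_concentration_whp_general {Ω : Type*} {m0 : MeasurableSpace Ω}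
    (μ : Measure Ω) [IsProbabilityMeasure μ] (ℱ : Filtration ℕ m0)
    {M : ℕ} (Y : ℕ → Ω → Fin M)
    (hY : ∀ τ, Measurable[ℱ τ] (Y τ))
    (i k : ℕ) {ε δ : ℝ} (hε : 0 < ε)
    (hkey : 2 ^ (M + 2) * k * Real.exp (-((k : ℝ) - 1) * ε ^ 2 / 2) ≤ δ) :
    ENNReal.ofReal (1 - δ) ≤
      μ {ω | ∀ l ∈ Icc (i + 1) (i + k), ∀ t ∈ ({k - 1, k} : Finset ℕ),
        tvMix μ ℱ Y l t ω < ε} := by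
  set good := {ω | ∀ l ∈ Icc (i + 1) (i + k), ∀ t ∈ ({k - 1, k} : Finset ℕ),
    tvMix μ ℱ Y l t ω < ε}
  have hbad : goodᶜ = {ω | ∃ l ∈ Icc (i + 1) (i + k), ∃ t ∈ ({k - 1, k} : Finset ℕ),
      ε ≤ tvMix μ ℱ Y l t ω} := by
    ext ω
    simp only [good, Set.mem_compl_iff, Set.mem_ofPred_eq, not_forall, not_lt, exists_prop]
  have hcover := measureReal_union_le (μ := μ) good goodᶜ
  rw [Set.union_compl_self, probReal_univ, hbad] at hcover
  have hbad_le := measureReal_exists_tvMix_ge_le (μ := μ) hY hε.le i k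
  rw [← ofReal_measureReal (μ := μ) (s := good)]
  exact ENNReal.ofReal_le_ofReal (by linarith)

/-- **Lemma 1 (high-probability form).**
Fix `i ∈ ℕ`, `k ≥ 2`, `ε > 0` and `δ ∈ (0,1)`.  If `k` is large enough that
`2^{M+2} · k · exp(−(k−1) ε² / 2) ≤ δ`, then with probability at least `1 − δ` we
have `TV(P̄_l^{l+t}, P̂_l^{l+t}) < ε` simultaneously for every start index
`l ∈ {i+1, …, i+k}` and every window length `t ∈ {k−1, k}`. -/
theorem probe_concentration_whp {Ω : Type*} {m0 : MeasurableSpace Ω}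
    (μ : Measure Ω) [IsProbabilityMeasure μ] (ℱ : Filtration ℕ m0)
    {M : ℕ} (hM : 1 ≤ M) (Y : ℕ → Ω → Fin M)
    (hY : ∀ τ, Measurable[ℱ τ] (Y τ))
    (i k : ℕ) (hk : 2 ≤ k) {ε δ : ℝ} (hε : 0 < ε) (hδ : δ ∈ Set.Ioo (0 : ℝ) 1)
    (hkey : 2 ^ (M + 2) * k * Real.exp (-((k : ℝ) - 1) * ε ^ 2 / 2) ≤ δ) :
    ENNReal.ofReal (1 - δ) ≤
      μ {ω | ∀ l ∈ Icc (i + 1) (i + k), ∀ t ∈ ({k - 1, k} : Finset ℕ),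
        tvMix μ ℱ Y l t ω < ε} :=
  probe_concentration_whp_general μ ℱ Y hY i k hε hkey
end
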